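/- Suppose D is unitary with inverse A = D⁻¹ = D*. Then the map (w, z) ↦ (Dw, z) is a bijection between the feasible set {(w,z) : Dw ∈ Γ, w = z} of the original S-SPADE formulation and the feasible set {(x,z) : x ∈ Γ, Ax = z} of the A-SPADE formulation, and it preserves the objective ‖z‖₀. In particular the two optimization problems have equal optimal values and corresponding optimal solutions. -/

import Mathlib

open Function Set

section Feasible

variable {α β : Type*} {D : α → β} {A : β → α}

theorem mapsTo_prodMap_synthesis_analysis (hAD : LeftInverse A D) (Γ : Set β) :
    MapsTo (Prod.map D id) {p : α × α | D p.1 ∈ Γ ∧ p.1 = p.2}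
      {p : β × α | p.1 ∈ Γ ∧ A p.1 = p.2} :=
  fun p ⟨hw, hwz⟩ => ⟨hw, (hAD p.1).trans hwz⟩

theorem mapsTo_prodMap_analysis_synthesis (hDA : RightInverse A D) (Γ : Set β) :
    MapsTo (Prod.map A id) {p : β × α | p.1 ∈ Γ ∧ A p.1 = p.2}
      {p : α × α | D p.1 ∈ Γ ∧ p.1 = p.2} :=
  fun q ⟨hx, hxz⟩ => ⟨(hDA q.1).symm ▸ hx, hxz⟩

theorem invOn_prodMap (hAD : LeftInverse A D) (hDA : RightInverse A D) (s : Set (α × α))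
    (t : Set (β × α)) : InvOn (Prod.map A id) (Prod.map D id) s t :=
  ⟨fun p _ => Prod.ext (hAD p.1) rfl, fun q _ => Prod.ext (hDA q.1) rfl⟩

theorem bijOn_prodMap_synthesis_analysis (hAD : LeftInverse A D) (hDA : RightInverse A D)
    (Γ : Set β) :
    BijOn (Prod.map D id) {p : α × α | D p.1 ∈ Γ ∧ p.1 = p.2}
      {p : β × α | p.1 ∈ Γ ∧ A p.1 = p.2} :=
  (invOn_prodMap hAD hDA _ _).bijOn (mapsTo_prodMap_synthesis_analysis hAD Γ)
    (mapsTo_prodMap_analysis_synthesis hDA Γ)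

end Feasible

theorem unitary_sspade_aspade_bijection_general (N : ℕ)
    (D A : EuclideanSpace ℂ (Fin N) →ₗ[ℂ] EuclideanSpace ℂ (Fin N))
    (hAD : ∀ w, A (D w) = w) (hDA : ∀ x, D (A x) = x)
    (Γ : Set (EuclideanSpace ℂ (Fin N))) :
    Set.BijOn
      (fun p : EuclideanSpace ℂ (Fin N) × EuclideanSpace ℂ (Fin N) => (D p.1, p.2))
      {p | D p.1 ∈ Γ ∧ p.1 = p.2}
      {p | p.1 ∈ Γ ∧ A p.1 = p.2} ∧
    ∀ p : EuclideanSpace ℂ (Fin N) × EuclideanSpace ℂ (Fin N),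
      Set.ncard {i | ((fun q : EuclideanSpace ℂ (Fin N) × EuclideanSpace ℂ (Fin N) =>
          (D q.1, q.2)) p).2 i ≠ 0} = Set.ncard {i | p.2 i ≠ 0} :=
  -- the objective only reads the second component, which the map leaves untouched
  ⟨bijOn_prodMap_synthesis_analysis (D := D) (A := A) hAD hDA Γ, fun _ => rfl⟩

/-- In the unitary case, `(w, z) ↦ (Dw, z)` is a bijection between the feasible
set of the original S-SPADE formulation `{(w,z) : Dw ∈ Γ, w = z}` and that of
the A-SPADE formulation `{(x,z) : x ∈ Γ, Ax = z}`, preserving the objective `‖z‖₀`. -/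
theorem unitary_sspade_aspade_bijection (N : ℕ)
    (D A : EuclideanSpace ℂ (Fin N) →ₗ[ℂ] EuclideanSpace ℂ (Fin N))
    (hAD : ∀ w, A (D w) = w) (hDA : ∀ x, D (A x) = x)
    (hadj : ∀ w z, (inner ℂ (D w) z : ℂ) = (inner ℂ w (A z) : ℂ))
    (Γ : Set (EuclideanSpace ℂ (Fin N))) :
    Set.BijOn
      (fun p : EuclideanSpace ℂ (Fin N) × EuclideanSpace ℂ (Fin N) => (D p.1, p.2))
      {p | D p.1 ∈ Γ ∧ p.1 = p.2}
      {p | p.1 ∈ Γ ∧ A p.1 = p.2} ∧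
    ∀ p : EuclideanSpace ℂ (Fin N) × EuclideanSpace ℂ (Fin N),
      Set.ncard {i | ((fun q : EuclideanSpace ℂ (Fin N) × EuclideanSpace ℂ (Fin N) =>
          (D q.1, q.2)) p).2 i ≠ 0} = Set.ncard {i | p.2 i ≠ 0} :=
  unitary_sspade_aspade_bijection_general N D A hAD hDA Γ
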